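/- arXiv:2007.08285 — 3 statements merged into one kernel-verified Lean document; each statement's English description precedes it below -/
import Mathlib

section
/- Let x, y be two distinct d-sparse vectors in [M]^r, where [M] = {0,1,...,M-1} and M ≥ 2. If z ∈ {0,1}^r is chosen uniformly at random, then the probability that x·z ≡ y·z (mod M) is at most 1/2. -/
open Finset

/-- If `x ≠ y` are `d`-sparse vectors with entries in `[M] = {0,…,M-1}`, `M ≥ 2`,
then for a uniformly random `z ∈ {0,1}^r` the probability that
`x·z ≡ y·z (mod M)` is at most `1/2`. -/
theorem stmt_2 (r M d : ℕ) (hM : 2 ≤ M) (x y : Fin r → ℕ)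
    (hx : ∀ i, x i < M) (hy : ∀ i, y i < M)
    (hxd : (Finset.univ.filter (fun i => x i ≠ 0)).card ≤ d)
    (hyd : (Finset.univ.filter (fun i => y i ≠ 0)).card ≤ d)
    (hxy : x ≠ y) :
    (((Finset.univ.filter (fun z : Fin r → Bool =>
        (∑ i, x i * (if z i then 1 else 0)) % M
          = (∑ i, y i * (if z i then 1 else 0)) % M)).card : ℝ) / 2 ^ r)
      ≤ 1 / 2 := by
  haveI : NeZero M := ⟨by omega⟩
  obtain ⟨i₀, hi₀⟩ := Function.ne_iff.mp hxy
  set S := (Finset.univ.filter (fun z : Fin r → Bool =>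
        (∑ i, x i * (if z i then 1 else 0)) % M
          = (∑ i, y i * (if z i then 1 else 0)) % M)) with hS
  have hmem : ∀ z : Fin r → Bool, z ∈ S ↔
      (∑ i, (x i : ZMod M) * (if z i then 1 else 0))
        = (∑ i, (y i : ZMod M) * (if z i then 1 else 0)) := by
    intro z
    rw [hS, mem_filter]
    simp only [mem_univ, true_and]
    constructor
    · intro h
      have h2 := (ZMod.natCast_eq_natCast_iff _ _ _).mpr h
      push_cast at h2
      exact h2
    · intro h
      have h2 : ((∑ i, x i * (if z i then 1 else 0) : ℕ) : ZMod M)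
          = ((∑ i, y i * (if z i then 1 else 0) : ℕ) : ZMod M) := by
        push_cast
        exact h
      exact (ZMod.natCast_eq_natCast_iff _ _ _).mp h2
  set f : (Fin r → Bool) → (Fin r → Bool) :=
    fun z => Function.update z i₀ (!z i₀) with hf
  have hflip : ∀ z : Fin r → Bool, z ∈ S → f z ∉ S := by
    intro z hz hz'
    rw [hmem] at hz hz'
    have hsum : ∀ v : Fin r → ℕ,
        (∑ i, (v i : ZMod M) * (if f z i then 1 else 0))
          = (∑ i, (v i : ZMod M) * (if z i then 1 else 0))
            + (v i₀ : ZMod M) *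
              ((if !z i₀ then 1 else 0) - (if z i₀ then 1 else 0)) := by
      intro v
      rw [← Finset.sum_erase_add _ _ (Finset.mem_univ i₀),
          ← Finset.sum_erase_add _
            (fun i => (v i : ZMod M) * (if z i then 1 else 0)) (Finset.mem_univ i₀)]
      have hcongr : ∀ i ∈ Finset.univ.erase i₀,
          (v i : ZMod M) * (if f z i then 1 else 0)
            = (v i : ZMod M) * (if z i then 1 else 0) := by
        intro i hi
        rw [hf]
        simp only [Function.update_of_ne (Finset.mem_erase.mp hi).1]
      rw [Finset.sum_congr rfl hcongr, hf]
      simp only [Function.update_self]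
      ring
    rw [hsum x, hsum y, hz] at hz'
    have hcancel : (x i₀ : ZMod M) *
        ((if !z i₀ then 1 else 0) - (if z i₀ then 1 else 0))
        = (y i₀ : ZMod M) *
        ((if !z i₀ then 1 else 0) - (if z i₀ then 1 else 0)) := by
      exact add_left_cancel hz'
    have hxyM : (x i₀ : ZMod M) = (y i₀ : ZMod M) := by
      cases hzi : z i₀ <;> simp [hzi] at hcancel <;>
        exact hcancel
    apply hi₀
    have := congrArg ZMod.val hxyM
    rwa [ZMod.val_cast_of_lt (hx i₀), ZMod.val_cast_of_lt (hy i₀)] at this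
  have hinj : Function.Injective f := by
    have hff : ∀ z, f (f z) = z := by
      intro z
      rw [hf]
      simp [Function.update_idem, Function.update_self, Bool.not_not,
        Function.update_eq_self]
    intro a b h
    rw [← hff a, ← hff b, h]
  have hdisj : Disjoint S (S.image f) := by
    rw [Finset.disjoint_left]
    intro w hw hw'
    obtain ⟨z, hz, rfl⟩ := Finset.mem_image.mp hw'
    exact hflip z hz hw
  have hcard : S.card + S.card ≤ 2 ^ r := by
    calc S.card + S.card = (S ∪ S.image f).card := by
          rw [Finset.card_union_of_disjoint hdisj,
            Finset.card_image_of_injective _ hinj]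
      _ ≤ (Finset.univ : Finset (Fin r → Bool)).card :=
          Finset.card_le_card (Finset.subset_univ _)
      _ = 2 ^ r := by simp [Finset.card_univ]
  rw [div_le_div_iff₀ (by positivity) (by norm_num)]
  have h2 : ((S.card : ℝ)) * 2 ≤ 2 ^ r := by
    exact_mod_cast (by omega : S.card * 2 ≤ 2 ^ r)
  linarith
end

section
/- Let r, M, d be positive integers with M ≥ 2 and d ≤ r/2, let A be an N-by-r matrix whose rows are all d-sparse strings in [M]^r (so N ≤ d·binom(r,d)·M^d), and let R be a random r-by-q Boolean matrix with independent uniform {0,1} entries. If q ≥ 2d·log₂(eMr/d) + 2·log₂(d) + log₂(1/δ), then with probability at least 1−δ the rows of AR mod M are pairwise distinct. -/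
open Finset


lemma aux_colcount {r M : ℕ} (hM : 2 ≤ M) (u v : Fin r → ℕ)
    (hu : ∀ i, u i < M) (hv : ∀ i, v i < M) (huv : u ≠ v) :
    2 * (univ.filter (fun x : Fin r → Bool =>
        (∑ k, u k * (if x k then 1 else 0)) % M
          = (∑ k, v k * (if x k then 1 else 0)) % M)).card ≤ 2 ^ r := by
  haveI : NeZero M := ⟨by omega⟩
  obtain ⟨k₀, hk₀⟩ : ∃ k, u k ≠ v k := Function.ne_iff.mp huv
  set S := univ.filter (fun x : Fin r → Bool =>
        (∑ k, u k * (if x k then 1 else 0)) % M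
          = (∑ k, v k * (if x k then 1 else 0)) % M) with hS
  set φ : (Fin r → Bool) → (Fin r → Bool) := fun x => Function.update x k₀ (!x k₀) with hφ
  have hφφ : ∀ x, φ (φ x) = x := by
    intro x
    funext k
    by_cases hk : k = k₀
    · subst hk
      simp [φ, Function.update_self]
    · simp [φ, Function.update_of_ne hk]
  have hinj : Function.Injective φ := Function.LeftInverse.injective hφφ
  have key : ∀ x ∈ S, φ x ∉ S := by
    intro x hx hφx
    rw [hS, mem_filter] at hx hφx
    have h1 : ((∑ k, u k * (if x k then 1 else 0) : ℕ) : ZMod M)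
        = ((∑ k, v k * (if x k then 1 else 0) : ℕ) : ZMod M) :=
      (ZMod.natCast_eq_natCast_iff' _ _ _).mpr hx.2
    have h2 : ((∑ k, u k * (if φ x k then 1 else 0) : ℕ) : ZMod M)
        = ((∑ k, v k * (if φ x k then 1 else 0) : ℕ) : ZMod M) :=
      (ZMod.natCast_eq_natCast_iff' _ _ _).mpr hφx.2
    push_cast at h1 h2
    have hsum : ∀ (w : Fin r → ℕ) (y : Fin r → Bool),
        ∑ k, (w k : ZMod M) * (if y k then 1 else 0)
          = (w k₀ : ZMod M) * (if y k₀ then 1 else 0)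
            + ∑ k ∈ univ.erase k₀, (w k : ZMod M) * (if y k then 1 else 0) :=
      fun w y => (Finset.add_sum_erase _ _ (mem_univ k₀)).symm
    have herase : ∀ w : Fin r → ℕ,
        ∑ k ∈ univ.erase k₀, (w k : ZMod M) * (if φ x k then 1 else 0)
          = ∑ k ∈ univ.erase k₀, (w k : ZMod M) * (if x k then 1 else 0) := by
      intro w
      refine Finset.sum_congr rfl fun k hk => ?_
      rw [hφ]
      simp only [Function.update_of_ne (mem_erase.mp hk).1]
    have hφk₀ : φ x k₀ = !x k₀ := Function.update_self _ _ _
    rw [hsum u x, hsum v x] at h1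
    rw [hsum u (φ x), hsum v (φ x), herase u, herase v, hφk₀] at h2
    have hcast : (u k₀ : ZMod M) = (v k₀ : ZMod M) := by
      cases hb : x k₀ <;> rw [hb] at h1 h2 <;>
        simp only [Bool.not_true, Bool.not_false, Bool.false_eq_true, if_true, if_false,
          if_neg (by simp : ¬(false = true)), mul_one, mul_zero, zero_add] at h1 h2
      · linear_combination h2 - h1
      · linear_combination h1 - h2
    apply hk₀
    have := congrArg ZMod.val hcast
    rwa [ZMod.val_cast_of_lt (hu k₀), ZMod.val_cast_of_lt (hv k₀)] at this
  have hdisj : Disjoint S (S.image φ) := by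
    rw [Finset.disjoint_right]
    intro a ha haS
    obtain ⟨x, hxS, rfl⟩ := Finset.mem_image.mp ha
    exact key x hxS haS
  calc 2 * S.card = S.card + (S.image φ).card := by
        rw [Finset.card_image_of_injective _ hinj]; ring
    _ = (S ∪ S.image φ).card := (Finset.card_union_of_disjoint hdisj).symm
    _ ≤ Fintype.card (Fin r → Bool) := Finset.card_le_univ _
    _ = 2 ^ r := by simp [Fintype.card_fun]

lemma aux_cols {r q : ℕ} (P : (Fin r → Bool) → Prop) [DecidablePred P] :
    (univ.filter (fun R : Fin r → Fin q → Bool => ∀ c, P (fun k => R k c))).card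
      = (univ.filter P).card ^ q := by
  have h1 : (univ.filter (fun R : Fin r → Fin q → Bool => ∀ c, P (fun k => R k c))).card
      = (univ.filter (fun f : Fin q → Fin r → Bool => ∀ c, P (f c))).card := by
    refine Finset.card_nbij' (fun R => Function.swap R) (fun f => Function.swap f)
      ?_ ?_ ?_ ?_ <;> intro a ha <;> simp_all [Function.swap, mem_filter]
  rw [h1]
  have h2 : (univ.filter (fun f : Fin q → Fin r → Bool => ∀ c, P (f c)))
      = Fintype.piFinset (fun _ : Fin q => univ.filter P) := by
    ext f
    simp [Fintype.mem_piFinset]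
  rw [h2, Fintype.card_piFinset]
  simp

lemma aux_count {r M d N : ℕ} (hM : 2 ≤ M) (hd : 0 < d) (hdr : 2 * d ≤ r)
    (A : Fin N → Fin r → ℕ) (hAinj : Function.Injective A)
    (hrows : ∀ n : Fin N, (∀ i, A n i < M) ∧ (univ.filter (fun i => A n i ≠ 0)).card ≤ d) :
    N ≤ r.choose d * M ^ d := by
  haveI : NeZero M := ⟨by omega⟩
  set F : Finset (Fin r → Fin M) :=
    univ.filter (fun v : Fin r → Fin M => (univ.filter (fun i => v i ≠ 0)).card ≤ d) with hF
  have hNF : N ≤ F.card := by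
    have hmem : ∀ n : Fin N,
        (fun i => (⟨A n i, (hrows n).1 i⟩ : Fin M)) ∈ F := by
      intro n
      rw [hF, mem_filter]
      refine ⟨mem_univ _, ?_⟩
      have : (univ.filter (fun i => (⟨A n i, (hrows n).1 i⟩ : Fin M) ≠ 0))
          = univ.filter (fun i => A n i ≠ 0) := by
        ext i
        simp [Fin.ext_iff]
      rw [this]
      exact (hrows n).2
    have hinj : Set.InjOn (fun n : Fin N => (fun i => (⟨A n i, (hrows n).1 i⟩ : Fin M)))
        (univ : Finset (Fin N)) := by
      intro n _ m _ h
      apply hAinj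
      funext i
      exact congrArg Fin.val (congrFun h i)
    calc N = (univ : Finset (Fin N)).card := by simp
      _ ≤ F.card := Finset.card_le_card_of_injOn _ (fun n _ => hmem n) hinj
  refine hNF.trans ?_
  have hsub : F ⊆ (univ.powersetCard d).biUnion
      (fun s => univ.filter (fun v : Fin r → Fin M => ∀ i, i ∉ s → v i = 0)) := by
    intro v hv
    rw [hF, mem_filter] at hv
    obtain ⟨s, hss, -, hcard⟩ := Finset.exists_subsuperset_card_eq
      (Finset.subset_univ (univ.filter (fun i => v i ≠ 0))) hv.2
      (by simp; omega)
    refine Finset.mem_biUnion.mpr ⟨s, ?_, ?_⟩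
    · rw [Finset.mem_powersetCard]; exact ⟨subset_univ _, hcard⟩
    · rw [mem_filter]
      refine ⟨mem_univ _, fun i hi => ?_⟩
      by_contra h
      exact hi (hss (mem_filter.mpr ⟨mem_univ _, h⟩))
  refine (Finset.card_le_card hsub).trans ?_
  refine (Finset.card_biUnion_le).trans ?_
  have hbound : ∀ s ∈ univ.powersetCard d,
      (univ.filter (fun v : Fin r → Fin M => ∀ i, i ∉ s → v i = 0)).card ≤ M ^ d := by
    intro s hs
    rw [Finset.mem_powersetCard] at hs
    have : (univ.filter (fun v : Fin r → Fin M => ∀ i, i ∉ s → v i = 0)).card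
        ≤ (univ : Finset ({x // x ∈ s} → Fin M)).card := by
      refine Finset.card_le_card_of_injOn (fun v => (fun i => v i.1)) (fun v _ => mem_univ _) ?_
      intro v hv w hw h
      rw [mem_coe, mem_filter] at hv hw
      funext i
      by_cases hi : i ∈ s
      · exact congrFun h ⟨i, hi⟩
      · rw [hv.2 i hi, hw.2 i hi]
    refine this.trans ?_
    rw [Finset.card_univ, Fintype.card_fun, Fintype.card_fin, Fintype.card_coe, hs.2]
  refine (Finset.sum_le_sum hbound).trans ?_
  rw [Finset.sum_const, smul_eq_mul, Finset.card_powersetCard, Finset.card_univ, Fintype.card_fin]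

lemma aux_real {r M d N q : ℕ} (hr : 0 < r) (hd : 0 < d) (hM : 2 ≤ M)
    {δ : ℝ} (hδ : 0 < δ)
    (hN : N ≤ r.choose d * M ^ d)
    (hq : 2 * (d : ℝ) * Real.logb 2 (Real.exp 1 * M * r / d)
            + 2 * Real.logb 2 d + Real.logb 2 (1 / δ) ≤ (q : ℝ)) :
    (N : ℝ) * N ≤ δ * 2 ^ q := by
  have hd' : (0:ℝ) < (d:ℝ) := by exact_mod_cast hd
  have hr' : (0:ℝ) < (r:ℝ) := by exact_mod_cast hr
  have hM' : (0:ℝ) < (M:ℝ) := by positivity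
  set a : ℝ := Real.exp 1 * M * r / d with ha
  have hapos : 0 < a := by
    apply div_pos _ hd'
    positivity
  set X : ℝ := a ^ (2 * d) * (d:ℝ) ^ 2 * (1 / δ) with hX
  have hXpos : 0 < X := by positivity
  have hlogX : Real.logb 2 X
      = 2 * (d : ℝ) * Real.logb 2 a + 2 * Real.logb 2 (d:ℝ) + Real.logb 2 (1/δ) := by
    rw [hX, Real.logb_mul (by positivity) (by positivity),
      Real.logb_mul (by positivity) (by positivity), Real.logb_pow, Real.logb_pow]
    push_cast
    ring
  have h2q : X ≤ (2:ℝ) ^ q := by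
    have hlq : Real.logb 2 X ≤ (q:ℝ) := by rw [hlogX]; exact hq
    have := (Real.logb_le_iff_le_rpow (b := 2) (by norm_num) hXpos).mp hlq
    rwa [Real.rpow_natCast] at this
  have hNa : (N:ℝ) ≤ a ^ d := by
    have h1 : (N:ℝ) ≤ (r.choose d : ℝ) * (M:ℝ) ^ d := by exact_mod_cast hN
    have h2 : (r.choose d : ℝ) ≤ (r:ℝ) ^ d / (d.factorial : ℝ) := Nat.choose_le_pow_div d r
    have h3 : (d:ℝ) ^ d / (d.factorial : ℝ) ≤ Real.exp 1 ^ d := by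
      rw [Real.exp_one_pow]
      exact Real.pow_div_factorial_le_exp _ hd'.le d
    have hfac : (0:ℝ) < (d.factorial : ℝ) := by positivity
    have hdd : (0:ℝ) < (d:ℝ) ^ d := by positivity
    have h5 : (d:ℝ) ^ d ≤ Real.exp 1 ^ d * (d.factorial : ℝ) := by
      rw [← div_le_iff₀ hfac]; exact h3
    have h4 : ((r:ℝ) ^ d / (d.factorial : ℝ)) * (M:ℝ) ^ d ≤ a ^ d := by
      rw [ha, div_pow, mul_pow, mul_pow, div_mul_eq_mul_div, div_le_div_iff₀ hfac hdd]
      have hrM : (0:ℝ) ≤ (r:ℝ) ^ d * (M:ℝ) ^ d := by positivity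
      nlinarith [mul_le_mul_of_nonneg_left h5 hrM]
    calc (N:ℝ) ≤ (r.choose d : ℝ) * (M:ℝ) ^ d := h1
      _ ≤ ((r:ℝ) ^ d / (d.factorial : ℝ)) * (M:ℝ) ^ d :=
          mul_le_mul_of_nonneg_right h2 (by positivity)
      _ ≤ a ^ d := h4
  have hXδ : δ * X = a ^ (2*d) * (d:ℝ) ^ 2 := by
    rw [hX]; field_simp
  have hd1 : (1:ℝ) ≤ (d:ℝ) ^ 2 := by
    have : (1:ℝ) ≤ (d:ℝ) := by exact_mod_cast hd
    nlinarith
  calc (N:ℝ) * N ≤ a ^ d * a ^ d :=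
        mul_le_mul hNa hNa (by positivity) (by positivity)
    _ = a ^ (2*d) := by rw [← pow_add]; ring_nf
    _ ≤ a ^ (2*d) * (d:ℝ) ^ 2 := le_mul_of_one_le_right (by positivity) hd1
    _ = δ * X := hXδ.symm
    _ ≤ δ * 2 ^ q := mul_le_mul_of_nonneg_left h2q hδ.le

/-- Let `A` be an `N×r` matrix whose rows are exactly all the `d`-sparse strings in
`[M]^r` (`M ≥ 2`, `d ≤ r/2`), and let `R` be a uniformly random `r×q` Boolean matrix.
If `q ≥ 2d·log₂(eMr/d) + 2log₂ d + log₂(1/δ)` then with probability at least `1 - δ`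
the rows of `AR mod M` are pairwise distinct. -/
theorem stmt_3 (r M d N q : ℕ) (hr : 0 < r) (hd : 0 < d) (hM : 2 ≤ M)
    (hdr : 2 * d ≤ r) (δ : ℝ) (hδ : 0 < δ)
    (A : Fin N → Fin r → ℕ)
    (hAinj : Function.Injective A)
    (hrows : ∀ v : Fin r → ℕ,
      ((∀ i, v i < M) ∧ (Finset.univ.filter (fun i => v i ≠ 0)).card ≤ d)
        ↔ ∃ n, A n = v)
    (hq : 2 * (d : ℝ) * Real.logb 2 (Real.exp 1 * M * r / d)
            + 2 * Real.logb 2 d + Real.logb 2 (1 / δ) ≤ (q : ℝ)) :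
    1 - δ ≤
      ((Finset.univ.filter (fun R : Fin r → Fin q → Bool =>
          ∀ i j : Fin N, i ≠ j → ∃ c : Fin q,
            (∑ k, A i k * (if R k c then 1 else 0)) % M
              ≠ (∑ k, A j k * (if R k c then 1 else 0)) % M)).card : ℝ)
        / 2 ^ (r * q) := by
  have hrow : ∀ n : Fin N, (∀ i, A n i < M) ∧ (univ.filter (fun i => A n i ≠ 0)).card ≤ d :=
    fun n => (hrows (A n)).mpr ⟨n, rfl⟩
  have hN : N ≤ r.choose d * M ^ d := aux_count hM hd hdr A hAinj hrow
  have hNN : (N : ℝ) * N ≤ δ * 2 ^ q := aux_real hr hd hM hδ hN hq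
  set Pred : (Fin r → Fin q → Bool) → Prop := fun R =>
      ∀ i j : Fin N, i ≠ j → ∃ c : Fin q,
        (∑ k, A i k * (if R k c then 1 else 0)) % M
          ≠ (∑ k, A j k * (if R k c then 1 else 0)) % M with hPred
  set good := univ.filter Pred with hgood
  set bad := univ.filter (fun R => ¬ Pred R) with hbad
  have htot : good.card + bad.card = 2 ^ (r * q) := by
    rw [hgood, hbad, Finset.card_filter_add_card_filter_not, Finset.card_univ]
    rw [Fintype.card_fun, Fintype.card_fun]
    rw [← pow_mul, Nat.mul_comm]
    simp
  -- bound on bad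
  have hpair : ∀ i j : Fin N, i ≠ j →
      (univ.filter (fun R : Fin r → Fin q → Bool => ∀ c,
        (∑ k, A i k * (if R k c then 1 else 0)) % M
          = (∑ k, A j k * (if R k c then 1 else 0)) % M)).card ≤ 2 ^ ((r-1) * q) := by
    intro i j hij
    have hB : 2 * (univ.filter (fun x : Fin r → Bool =>
        (∑ k, A i k * (if x k then 1 else 0)) % M
          = (∑ k, A j k * (if x k then 1 else 0)) % M)).card ≤ 2 ^ r :=
      aux_colcount hM (A i) (A j) (hrow i).1 (hrow j).1 (fun h => hij (hAinj h))
    have hB' : (univ.filter (fun x : Fin r → Bool =>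
        (∑ k, A i k * (if x k then 1 else 0)) % M
          = (∑ k, A j k * (if x k then 1 else 0)) % M)).card ≤ 2 ^ (r - 1) := by
      obtain ⟨n, rfl⟩ : ∃ n, r = n + 1 := ⟨r - 1, (Nat.succ_pred_eq_of_pos hr).symm⟩
      simp only [Nat.add_sub_cancel]
      rw [pow_succ'] at hB
      exact Nat.le_of_mul_le_mul_left hB Nat.zero_lt_two
    have hcols := aux_cols (q := q) (P := fun x : Fin r → Bool =>
      (∑ k, A i k * (if x k then 1 else 0)) % M
        = (∑ k, A j k * (if x k then 1 else 0)) % M)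
    calc (univ.filter (fun R : Fin r → Fin q → Bool => ∀ c,
        (∑ k, A i k * (if R k c then 1 else 0)) % M
          = (∑ k, A j k * (if R k c then 1 else 0)) % M)).card
        = (univ.filter (fun x : Fin r → Bool =>
              (∑ k, A i k * (if x k then 1 else 0)) % M
                = (∑ k, A j k * (if x k then 1 else 0)) % M)).card ^ q := hcols
      _ ≤ (2 ^ (r - 1)) ^ q := Nat.pow_le_pow_left hB' q
      _ = 2 ^ ((r - 1) * q) := by rw [← pow_mul]
  have hbadcard : bad.card ≤ N * N * 2 ^ ((r - 1) * q) := by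
    have hsub : bad ⊆ (univ ×ˢ univ : Finset (Fin N × Fin N)).biUnion
        (fun p => univ.filter (fun R : Fin r → Fin q → Bool => p.1 ≠ p.2 ∧ ∀ c,
          (∑ k, A p.1 k * (if R k c then 1 else 0)) % M
            = (∑ k, A p.2 k * (if R k c then 1 else 0)) % M)) := by
      intro R hR
      simp only [hbad, hPred, mem_filter, mem_univ, true_and] at hR
      push_neg at hR
      obtain ⟨i, j, hij, hcol⟩ := hR
      exact Finset.mem_biUnion.mpr ⟨(i, j), Finset.mem_product.mpr ⟨mem_univ _, mem_univ _⟩,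
        mem_filter.mpr ⟨mem_univ _, hij, hcol⟩⟩
    refine (Finset.card_le_card hsub).trans ((Finset.card_biUnion_le).trans ?_)
    have hterm : ∀ p ∈ (univ ×ˢ univ : Finset (Fin N × Fin N)),
        (univ.filter (fun R : Fin r → Fin q → Bool => p.1 ≠ p.2 ∧ ∀ c,
          (∑ k, A p.1 k * (if R k c then 1 else 0)) % M
            = (∑ k, A p.2 k * (if R k c then 1 else 0)) % M)).card ≤ 2 ^ ((r-1) * q) := by
      intro p _
      by_cases hp : p.1 = p.2
      · have : (univ.filter (fun R : Fin r → Fin q → Bool => p.1 ≠ p.2 ∧ ∀ c,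
            (∑ k, A p.1 k * (if R k c then 1 else 0)) % M
              = (∑ k, A p.2 k * (if R k c then 1 else 0)) % M)) = ∅ := by
          apply Finset.filter_false_of_mem
          intro R _ h
          exact h.1 hp
        rw [this]
        simp
      · refine le_trans (Finset.card_le_card fun R hR =>
          mem_filter.mpr ⟨mem_univ _, (mem_filter.mp hR).2.2⟩) (hpair p.1 p.2 hp)
    refine (Finset.sum_le_sum hterm).trans ?_
    rw [Finset.sum_const, smul_eq_mul]
    apply Nat.mul_le_mul_right
    rw [Finset.card_product, Finset.card_univ, Fintype.card_fin]
  -- real arithmetic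
  have hpow : (0:ℝ) < 2 ^ (r * q) := by positivity
  rw [le_div_iff₀ hpow]
  have htotR : (good.card : ℝ) + (bad.card : ℝ) = 2 ^ (r * q) := by exact_mod_cast htot
  have hbadR : (bad.card : ℝ) ≤ δ * 2 ^ (r * q) := by
    have h1 : (bad.card : ℝ) ≤ (N : ℝ) * N * 2 ^ ((r - 1) * q) := by exact_mod_cast hbadcard
    have h2 : (N : ℝ) * N * 2 ^ ((r - 1) * q) ≤ (δ * 2 ^ q) * 2 ^ ((r - 1) * q) :=
      mul_le_mul_of_nonneg_right hNN (by positivity)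
    have h3 : (δ * 2 ^ q) * 2 ^ ((r - 1) * q) = δ * 2 ^ (r * q) := by
      rw [mul_assoc, ← pow_add]
      congr 2
      obtain ⟨n, rfl⟩ : ∃ n, r = n + 1 := ⟨r - 1, (Nat.succ_pred_eq_of_pos hr).symm⟩
      simp [Nat.add_mul]
      ring
    linarith
  nlinarith [htotR, hbadR]
end

section
/- Let A ∈ {0,1}^{N×k} have linearly independent columns and b ∈ {0,1}^N. Suppose the linear system A x = b has no real solution x ∈ ℝ^k. Then the integer vector ŷ = det(AᵀA)·(I − A(AᵀA)^{-1}Aᵀ)·b satisfies: (1) ŷᵀA = 0; (2) ŷᵀb ≠ 0; (3) ‖ŷ‖_∞ ≤ N^{k+1/2}·k^{k/2}. -/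
open Matrix

/-!
Write `G = AᵀA`. Since `G⁻¹ = adj G / det G`, the vector `ŷ` equals `det G • b - A adj(G) Aᵀ b`,
a polynomial expression in the entries of `A` and `b`, hence integral; and `Aᵀ ŷ = 0` because
`G adj G = det G`. Splitting `det G • b = ŷ + A w` orthogonally gives `det G (ŷ ⬝ b) = ŷ ⬝ ŷ`,
which is nonzero as `b` is not in the range of `A`, and `ŷ ⬝ ŷ ≤ (det G)² (b ⬝ b) ≤ (det G)² N`.
Finally AM-GM on the eigenvalues of `G` gives `det G ≤ (tr G / k)^k ≤ N^k`.
-/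

theorem Real.prod_le_arith_mean_pow {ι : Type*} [Fintype ι] {z : ι → ℝ} (hz : ∀ i, 0 ≤ z i) :
    ∏ i, z i ≤ ((∑ i, z i) / Fintype.card ι) ^ Fintype.card ι := by
  rcases isEmpty_or_nonempty ι with _ | _
  · simp
  have hcard : (0 : ℝ) < Fintype.card ι := by exact_mod_cast Fintype.card_pos
  have hprod : 0 ≤ ∏ i, z i := Finset.prod_nonneg fun i _ => hz i
  have amgm := Real.geom_mean_le_arith_mean Finset.univ (fun _ => 1) z (fun _ _ => zero_le_one)
    (by simpa using hcard) (fun i _ => hz i)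
  simp only [Real.rpow_one, Finset.sum_const, Finset.card_univ, nsmul_eq_mul, mul_one,
    one_mul] at amgm
  calc ∏ i, z i = ((∏ i, z i) ^ (Fintype.card ι : ℝ)⁻¹) ^ Fintype.card ι := by
        rw [← Real.rpow_natCast, ← Real.rpow_mul hprod, inv_mul_cancel₀ hcard.ne', Real.rpow_one]
    _ ≤ _ := by gcongr

namespace Matrix

variable {m n R : Type*} [Fintype m] [Fintype n]

theorem PosSemidef.det_le_trace_div_card_pow [DecidableEq n] {A : Matrix n n ℝ}
    (hA : A.PosSemidef) : A.det ≤ (A.trace / Fintype.card n) ^ Fintype.card n := by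
  rw [hA.isHermitian.det_eq_prod_eigenvalues, hA.isHermitian.trace_eq_sum_eigenvalues]
  simpa using Real.prod_le_arith_mean_pow hA.eigenvalues_nonneg

theorem trace_transpose_mul_self_le {A : Matrix m n ℝ} (hA : ∀ i j, |A i j| ≤ 1) :
    (Aᵀ * A).trace ≤ Fintype.card m * Fintype.card n := by
  calc (Aᵀ * A).trace = ∑ j, ∑ i, |A i j| * |A i j| := by
        simp [trace, Matrix.mul_apply, abs_mul_abs_self]
    _ ≤ ∑ _ : n, ∑ _ : m, (1 : ℝ) := by
        gcongr with j _ i _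
        exact mul_le_one₀ (hA i j) (abs_nonneg _) (hA i j)
    _ = _ := by simp [mul_comm]

theorem det_transpose_mul_self_le [DecidableEq n] {A : Matrix m n ℝ} (hA : ∀ i j, |A i j| ≤ 1) :
    (Aᵀ * A).det ≤ (Fintype.card m : ℝ) ^ Fintype.card n := by
  have hpsd : (Aᵀ * A).PosSemidef := by simpa using posSemidef_conjTranspose_mul_self A
  refine hpsd.det_le_trace_div_card_pow.trans (pow_le_pow_left₀ ?_ ?_ _)
  · exact div_nonneg hpsd.trace_nonneg (Nat.cast_nonneg _)
  · exact div_le_of_le_mul₀ (Nat.cast_nonneg _) (Nat.cast_nonneg _) (trace_transpose_mul_self_le hA)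

theorem posDef_transpose_mul_self {A : Matrix m n ℝ} (hA : LinearIndependent ℝ A.col) :
    (Aᵀ * A).PosDef := by
  simpa using PosDef.conjTranspose_mul_self A (mulVec_injective_iff.mpr hA)

section DotProduct

variable [CommRing R] [LinearOrder R] [IsStrictOrderedRing R]

theorem dotProduct_self_nonneg (v : m → R) : 0 ≤ v ⬝ᵥ v :=
  Finset.sum_nonneg fun i _ => mul_self_nonneg (v i)

theorem sq_le_dotProduct_self (v : m → R) (i : m) : v i ^ 2 ≤ v ⬝ᵥ v :=
  (sq (v i)).symm ▸ Finset.single_le_sum (fun j _ => mul_self_nonneg (v j)) (Finset.mem_univ i)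

theorem dotProduct_self_le_card {v : m → R} (hv : ∀ i, |v i| ≤ 1) :
    v ⬝ᵥ v ≤ Fintype.card m := by
  calc v ⬝ᵥ v ≤ ∑ _ : m, (1 : R) :=
        Finset.sum_le_sum fun i _ => by
          rw [← abs_mul_abs_self]; exact mul_le_one₀ (hv i) (abs_nonneg _) (hv i)
    _ = Fintype.card m := by simp

end DotProduct

variable [DecidableEq n]

/-- The paper's `ŷ = det(AᵀA) • (1 - A (AᵀA)⁻¹ Aᵀ) b`, with the inverse replaced by the adjugate
so that it is defined over any commutative ring. -/
def adjResidual [CommRing R] (A : Matrix m n R) (b : m → R) : m → R :=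
  (Aᵀ * A).det • b - (A * (Aᵀ * A).adjugate * Aᵀ) *ᵥ b

section CommRing

variable [CommRing R] (A : Matrix m n R) (b : m → R)

theorem adjResidual_vecMul : adjResidual A b ᵥ* A = 0 := by
  rw [← mulVec_transpose, adjResidual, mulVec_sub, mulVec_smul, mulVec_mulVec,
    ← Matrix.mul_assoc, ← Matrix.mul_assoc, mul_adjugate, Matrix.smul_mul, Matrix.one_mul,
    smul_mulVec, sub_self]

theorem adjResidual_add_mulVec :
    adjResidual A b + A *ᵥ ((Aᵀ * A).adjugate *ᵥ (Aᵀ *ᵥ b)) = (Aᵀ * A).det • b := by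
  rw [adjResidual, mulVec_mulVec, mulVec_mulVec, sub_add_cancel]

theorem adjResidual_dotProduct_mulVec (w : n → R) : adjResidual A b ⬝ᵥ (A *ᵥ w) = 0 := by
  rw [dotProduct_mulVec, adjResidual_vecMul, zero_dotProduct]

theorem det_mul_adjResidual_dotProduct :
    (Aᵀ * A).det * (adjResidual A b ⬝ᵥ b) = adjResidual A b ⬝ᵥ adjResidual A b := by
  rw [← smul_eq_mul, ← dotProduct_smul, ← adjResidual_add_mulVec, dotProduct_add,
    adjResidual_dotProduct_mulVec, add_zero]

theorem adjResidual_map {S : Type*} [CommRing S] (f : R →+* S) :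
    adjResidual (A.map f) (f ∘ b) = f ∘ adjResidual A b := by
  have hG : (A.map f)ᵀ * A.map f = f.mapMatrix (Aᵀ * A) := by
    rw [RingHom.mapMatrix_apply, Matrix.map_mul, transpose_map]
  funext i
  rw [adjResidual, hG, ← RingHom.map_det, ← RingHom.map_adjugate, RingHom.mapMatrix_apply,
    ← transpose_map, ← Matrix.map_mul, ← Matrix.map_mul, Pi.sub_apply, ← RingHom.map_mulVec]
  simp [adjResidual]

theorem adjResidual_mem_range {S : Type*} [CommRing S] {f : R →+* S} {A : Matrix m n S}
    {b : m → S} (hA : ∀ i j, A i j ∈ f.range) (hb : ∀ i, b i ∈ f.range) (i : m) :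
    adjResidual A b i ∈ f.range := by
  choose A' hA' using hA
  choose b' hb' using hb
  obtain rfl : (of A').map f = A := Matrix.ext hA'
  obtain rfl : f ∘ b' = b := funext hb'
  rw [adjResidual_map]
  exact ⟨_, rfl⟩

theorem adjResidual_dotProduct_self_le [LinearOrder R] [IsStrictOrderedRing R] :
    adjResidual A b ⬝ᵥ adjResidual A b ≤ (Aᵀ * A).det ^ 2 * (b ⬝ᵥ b) := by
  set w := A *ᵥ ((Aᵀ * A).adjugate *ᵥ (Aᵀ *ᵥ b))
  calc adjResidual A b ⬝ᵥ adjResidual A b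
      ≤ adjResidual A b ⬝ᵥ adjResidual A b + w ⬝ᵥ w :=
        le_add_of_nonneg_right (dotProduct_self_nonneg w)
    _ = (adjResidual A b + w) ⬝ᵥ (adjResidual A b + w) := by
        rw [add_dotProduct, dotProduct_add, dotProduct_add, adjResidual_dotProduct_mulVec,
          dotProduct_comm w (adjResidual A b), adjResidual_dotProduct_mulVec, add_zero, zero_add]
    _ = ((Aᵀ * A).det • b) ⬝ᵥ ((Aᵀ * A).det • b) := by rw [adjResidual_add_mulVec]
    _ = (Aᵀ * A).det ^ 2 * (b ⬝ᵥ b) := by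
        rw [smul_dotProduct, dotProduct_smul, smul_eq_mul, smul_eq_mul]; ring

end CommRing

section Field

variable {K : Type*} [Field K] {A : Matrix m n K} {b : m → K}

theorem det_smul_one_sub_mulVec_eq_adjResidual [DecidableEq m] (hA : (Aᵀ * A).det ≠ 0) :
    (Aᵀ * A).det • ((1 - A * (Aᵀ * A)⁻¹ * Aᵀ) *ᵥ b) = adjResidual A b := by
  rw [adjResidual, inv_def, Ring.inverse_eq_inv', sub_mulVec, one_mulVec, smul_sub,
    Matrix.mul_smul, Matrix.smul_mul, smul_mulVec, smul_smul, mul_inv_cancel₀ hA, one_smul]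

theorem adjResidual_ne_zero (hA : (Aᵀ * A).det ≠ 0) (hb : ∀ x, A *ᵥ x ≠ b) :
    adjResidual A b ≠ 0 := by
  intro h
  apply hb ((Aᵀ * A).det⁻¹ • ((Aᵀ * A).adjugate *ᵥ (Aᵀ *ᵥ b)))
  have hsplit := adjResidual_add_mulVec A b
  rw [h, zero_add] at hsplit
  rw [mulVec_smul, hsplit, smul_smul, inv_mul_cancel₀ hA, one_smul]

theorem adjResidual_dotProduct_ne_zero [LinearOrder K] [IsStrictOrderedRing K]
    (hA : (Aᵀ * A).det ≠ 0) (hb : ∀ x, A *ᵥ x ≠ b) : adjResidual A b ⬝ᵥ b ≠ 0 := by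
  intro h
  apply adjResidual_ne_zero hA hb
  rw [← dotProduct_self_eq_zero, ← det_mul_adjResidual_dotProduct, h, mul_zero]

end Field

theorem abs_adjResidual_le {A : Matrix m n ℝ} {b : m → ℝ} (hA : 0 ≤ (Aᵀ * A).det)
    (hb : ∀ i, |b i| ≤ 1) (i : m) :
    |adjResidual A b i| ≤ (Aᵀ * A).det * √(Fintype.card m) := by
  rw [← Real.sqrt_sq hA, ← Real.sqrt_mul (sq_nonneg _)]
  apply Real.abs_le_sqrt
  calc adjResidual A b i ^ 2 ≤ adjResidual A b ⬝ᵥ adjResidual A b := sq_le_dotProduct_self _ i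
    _ ≤ (Aᵀ * A).det ^ 2 * (b ⬝ᵥ b) := adjResidual_dotProduct_self_le A b
    _ ≤ _ := by gcongr; exact dotProduct_self_le_card hb

end Matrix

/-- Fredholm-alternative-style lemma: if `A ∈ {0,1}^{N×k}` has linearly independent
columns, `b ∈ {0,1}^N`, and `Ax = b` has no real solution, then
`ŷ = det(AᵀA)·(I − A(AᵀA)⁻¹Aᵀ)·b` is an integer vector with `ŷᵀA = 0`, `ŷᵀb ≠ 0`,
and `‖ŷ‖_∞ ≤ N^{k+1/2}·k^{k/2}`. -/
theorem stmt_4 (N k : ℕ) (A : Matrix (Fin N) (Fin k) ℝ) (b : Fin N → ℝ)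
    (hA : ∀ i j, A i j = 0 ∨ A i j = 1)
    (hb : ∀ i, b i = 0 ∨ b i = 1)
    (hcols : LinearIndependent ℝ (fun j : Fin k => Aᵀ j))
    (hnosol : ¬ ∃ x : Fin k → ℝ, A *ᵥ x = b)
    (yhat : Fin N → ℝ)
    (hyhat : yhat = (Aᵀ * A).det • ((1 - A * (Aᵀ * A)⁻¹ * Aᵀ) *ᵥ b)) :
    (∀ i, ∃ z : ℤ, yhat i = (z : ℝ))
    ∧ yhat ᵥ* A = 0
    ∧ yhat ⬝ᵥ b ≠ 0
    ∧ ∀ i, |yhat i| ≤ (N : ℝ) ^ ((k : ℝ) + 1/2) * (k : ℝ) ^ ((k : ℝ) / 2) := by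
  have hdet : 0 < (Aᵀ * A).det := (posDef_transpose_mul_self hcols).det_pos
  have hsol : ∀ x, A *ᵥ x ≠ b := fun x hx => hnosol ⟨x, hx⟩
  have hA1 : ∀ i j, |A i j| ≤ 1 := fun i j => by rcases hA i j with h | h <;> simp [h]
  have hb1 : ∀ i, |b i| ≤ 1 := fun i => by rcases hb i with h | h <;> simp [h]
  have hk : 1 ≤ (k : ℝ) ^ ((k : ℝ) / 2) := by
    rcases k.eq_zero_or_pos with hk | hk
    · simp [hk]
    · exact Real.one_le_rpow (by exact_mod_cast hk) (by positivity)
  rw [det_smul_one_sub_mulVec_eq_adjResidual hdet.ne'] at hyhat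
  subst hyhat
  refine ⟨fun i => ?_, adjResidual_vecMul A b, adjResidual_dotProduct_ne_zero hdet.ne' hsol,
    fun i => ?_⟩
  · obtain ⟨z, hz⟩ := adjResidual_mem_range (f := Int.castRingHom ℝ)
      (fun i j => (hA i j).elim (· ▸ zero_mem _) (· ▸ one_mem _))
      (fun i => (hb i).elim (· ▸ zero_mem _) (· ▸ one_mem _)) i
    exact ⟨z, hz.symm⟩
  calc |adjResidual A b i| ≤ (Aᵀ * A).det * √N := by simpa using abs_adjResidual_le hdet.le hb1 i
    _ ≤ N ^ k * √N := by gcongr; simpa using det_transpose_mul_self_le hA1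
    _ = N ^ ((k : ℝ) + 1/2) := by
        rw [Real.rpow_add' (Nat.cast_nonneg _) (by positivity), Real.rpow_natCast,
          Real.sqrt_eq_rpow]
    _ ≤ _ := le_mul_of_one_le_right (by positivity) hk
end
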